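/- For every KOH tree T of type (n,k) with n, k ≥ 1, the quantity σ(T) := nk − ∑_{a ∈ ℒ(T)} a is a nonnegative even integer. -/

import Mathlib

open Polynomial

/-- `μ` is a partition: all parts positive. -/
def IsPtn (μ : Multiset ℕ) : Prop := ∀ x ∈ μ, 0 < x

/-- The `j`-th part of the conjugate partition, `μ'_j`. -/
def conjPart (μ : Multiset ℕ) (j : ℕ) : ℕ := (μ.filter (fun x => j ≤ x)).card

/-- `Q_j(μ) = μ'_1 + ⋯ + μ'_j`. -/
def Qsum (μ : Multiset ℕ) (j : ℕ) : ℕ := ∑ x ∈ Finset.Icc 1 j, conjPart μ x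

/-- `p_r(n,k)`: number of partitions of `r` with at most `k` parts, each of size at most `n`. -/
noncomputable def prnk (n k r : ℕ) : ℕ :=
  Nat.card {μ : Multiset ℕ // IsPtn μ ∧ μ.sum = r ∧ μ.card ≤ k ∧ ∀ x ∈ μ, x ≤ n}

/-- `p_r(n,k)` with integer index, `0` for negative `r`. -/
noncomputable def prZ (n k : ℕ) (r : ℤ) : ℕ := if r < 0 then 0 else prnk n k r.toNat

/-- Gaussian binomial `binom(M+m, m)_q = ∑_{r=0}^{Mm} p_r(M,m) q^r`. -/
noncomputable def qbinom (M m : ℕ) : Polynomial ℚ :=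
  ∑ r ∈ Finset.range (M * m + 1), Polynomial.C (prnk M m r : ℚ) * X ^ r

/-- Gaussian binomial with possibly negative first argument: `1` when `m = 0`,
`0` when `m ≥ 1` and `M < 0`. -/
noncomputable def qbinomZ (M : ℤ) (m : ℕ) : Polynomial ℚ :=
  if m = 0 then 1 else if M < 0 then 0 else qbinom M.toNat m

/-- `[a+1]_q = 1 + q + ⋯ + q^a`. -/
noncomputable def qint (a : ℕ) : Polynomial ℚ := ∑ i ∈ Finset.range (a + 1), (X : Polynomial ℚ) ^ i

/-- The distinct part sizes of `μ`, listed in increasing order. -/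
def distinctParts (μ : Multiset ℕ) : List ℕ := μ.toFinset.sort (· ≤ ·)

/-- Rooted trees with linearly ordered children, each vertex labeled `(μ, a, b)`. -/
inductive KOHTree : Type where
  | node (μ : Multiset ℕ) (a b : ℕ) (children : List KOHTree)

def KOHTree.ptn : KOHTree → Multiset ℕ | .node μ _ _ _ => μ
def KOHTree.topA : KOHTree → ℕ | .node _ a _ _ => a
def KOHTree.topB : KOHTree → ℕ | .node _ _ b _ => b

/-- Validity predicate for KOH trees. -/
inductive IsKOH : KOHTree → Prop where
  | leaf (a : ℕ) : IsKOH (.node {1} a 1 [])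
  | node (μ : Multiset ℕ) (a b : ℕ) (cs : List KOHTree)
      (hptn : IsPtn μ) (hsum : μ.sum = b) (hb : 2 ≤ b)
      (hlen : cs.length = (distinctParts μ).length)
      (hch : ∀ i, ∀ hi : i < cs.length, IsKOH (cs[i]'hi))
      (hlbl : ∀ i, ∀ hi : i < cs.length,
        ((cs[i]'hi).topA : ℤ) =
          ((a : ℤ) + 2) * (distinctParts μ).getD i 0
            - 2 * Qsum μ ((distinctParts μ).getD i 0) ∧
        (cs[i]'hi).topB = μ.count ((distinctParts μ).getD i 0)) :
      IsKOH (.node μ a b cs)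

/-- A KOH tree of type `(n,k)`: valid, with root labeled `(λ, n, k)`. -/
def KOHType (T : KOHTree) (n k : ℕ) : Prop := IsKOH T ∧ T.topA = n ∧ T.topB = k

mutual
  /-- The integer labels of the leaves of a KOH tree, by depth-first search left-to-right. -/
  def KOHTree.leaves : KOHTree → List ℕ
    | .node _ a _ [] => [a]
    | .node _ _ _ (c :: cs) => KOHTree.leavesList (c :: cs)
  def KOHTree.leavesList : List KOHTree → List ℕ
    | [] => []
    | t :: ts => t.leaves ++ KOHTree.leavesList ts
end

/-- Sum of leaves of a list of trees, as a `Fin`-indexed sum. -/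
lemma leavesList_sum_eq (cs : List KOHTree) :
    ((KOHTree.leavesList cs).sum : ℤ) =
      ∑ i : Fin cs.length, ((cs[(i : ℕ)].leaves.sum : ℤ)) := by
  induction cs with
  | nil => simp [KOHTree.leavesList]
  | cons t ts ih =>
    rw [KOHTree.leavesList]
    simp only [List.sum_append, Nat.cast_add, List.length_cons, Fin.sum_univ_succ]
    simp [ih]

/-- `j ≤ Qsum μ j` whenever `j` is a part of `μ`. -/
lemma le_Qsum {μ : Multiset ℕ} {j : ℕ} (hj : j ∈ μ) : j ≤ Qsum μ j := by
  have : ∀ x ∈ Finset.Icc 1 j, 1 ≤ conjPart μ x := by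
    intro x hx
    rw [Finset.mem_Icc] at hx
    have : j ∈ μ.filter (fun y => x ≤ y) := Multiset.mem_filter.2 ⟨hj, hx.2⟩
    have := Multiset.card_pos_iff_exists_mem.2 ⟨j, this⟩
    exact this
  calc j = ∑ _x ∈ Finset.Icc 1 j, 1 := by simp
    _ ≤ Qsum μ j := Finset.sum_le_sum this

/-- `∑_{j ∈ supp μ} j * m_j(μ) = |μ|`. -/
lemma sum_count_mul_eq_sum (μ : Multiset ℕ) :
    ∑ j ∈ μ.toFinset, μ.count j * j = μ.sum := by
  rw [Finset.sum_multiset_count μ]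
  simp [smul_eq_mul]

/-- Key induction: for any valid KOH tree, the sum of leaf labels is at most
`a*b` and has the same parity. -/
lemma koh_key : ∀ T : KOHTree, IsKOH T →
    ((T.leaves.sum : ℤ) ≤ (T.topA : ℤ) * T.topB ∧
      2 ∣ ((T.topA : ℤ) * T.topB - T.leaves.sum)) := by
  intro T hT
  induction hT with
  | leaf a => simp [KOHTree.leaves, KOHTree.topA, KOHTree.topB]
  | node μ a b cs hptn hsum hb hlen hch hlbl ih =>
    -- cs is nonempty
    cases cs with
    | nil =>
      exfalso
      have h0 : (distinctParts μ).length = 0 := by simpa using hlen.symm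
      have : μ.toFinset = ∅ := by
        have := Finset.length_sort (α := ℕ) (· ≤ ·) (s := μ.toFinset)
        rw [distinctParts] at h0
        exact Finset.card_eq_zero.1 (by omega)
      have hμ : μ = 0 := by simpa using this
      rw [hμ] at hsum; simp at hsum; omega
    | cons c cs' =>
      set cs := c :: cs' with hcs
      set L := distinctParts μ with hL
      have hLnd : L.Nodup := Finset.sort_nodup _ _
      have hLfin : L.toFinset = μ.toFinset := Finset.sort_toFinset _ _
      -- leaves sum
      have hleaves : ((KOHTree.node μ a b cs).leaves.sum : ℤ) =
          ∑ i : Fin cs.length, ((cs[(i : ℕ)].leaves.sum : ℤ)) := by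
        show ((KOHTree.node μ a b (c :: cs')).leaves.sum : ℤ) =
          ∑ i : Fin (c :: cs').length, (((c :: cs')[(i : ℕ)]).leaves.sum : ℤ)
        rw [KOHTree.leaves, leavesList_sum_eq]
      -- define the target function on parts
      set g : ℕ → ℤ := fun j =>
        (((a : ℤ) + 2) * j - 2 * Qsum μ j) * (μ.count j : ℤ) with hg
      -- S = sum over distinct parts
      have hS : (∑ i : Fin cs.length, ((cs[(i : ℕ)].topA : ℤ) * cs[(i : ℕ)].topB)) =
          ∑ j ∈ μ.toFinset, g j := by
        have hfin : (∑ i : Fin cs.length, ((cs[(i : ℕ)].topA : ℤ) * cs[(i : ℕ)].topB)) =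
            ∑ i : Fin cs.length, g (L.getD (i : ℕ) 0) := by
          apply Finset.sum_congr rfl
          intro i _
          obtain ⟨h1, h2⟩ := hlbl (i : ℕ) i.isLt
          rw [h1, h2, hg]
        rw [hfin]
        -- reindex: cs.length = L.length
        have hlen' : cs.length = L.length := by rw [hlen]
        have : (∑ i : Fin cs.length, g (L.getD (i : ℕ) 0)) =
            ∑ i : Fin L.length, g (L[(i : ℕ)]) := by
          rw [← Fin.sum_congr' (fun i : Fin L.length => g (L[(i : ℕ)])) hlen']
          apply Finset.sum_congr rfl
          intro i _
          have hi : (i : ℕ) < L.length := hlen' ▸ i.isLt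
          simp only [Fin.coe_cast]
          congr 1
          simp [List.getD_eq_getElem?_getD, List.getElem?_eq_getElem hi]
        rw [this]
        have : (∑ i : Fin L.length, g (L[(i : ℕ)])) = (L.map g).sum := by
          rw [← List.ofFn_getElem_eq_map, List.sum_ofFn]
        rw [this, ← List.sum_toFinset g hLnd, hLfin]
      -- the count-weighted sums
      have hA : (∑ j ∈ μ.toFinset, (μ.count j : ℤ) * j) = (b : ℤ) := by
        have := sum_count_mul_eq_sum μ
        rw [hsum] at this
        exact_mod_cast congrArg (Nat.cast : ℕ → ℤ) this
      have hQ : (b : ℤ) ≤ ∑ j ∈ μ.toFinset, (μ.count j : ℤ) * Qsum μ j := by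
        rw [← hA]
        apply Finset.sum_le_sum
        intro j hj
        have hjm : j ∈ μ := Multiset.mem_toFinset.1 hj
        have := le_Qsum hjm
        have : (j : ℤ) ≤ (Qsum μ j : ℤ) := by exact_mod_cast this
        exact mul_le_mul_of_nonneg_left this (by positivity)
      -- S = a*b - 2*(T' - b)
      have hSval : (∑ j ∈ μ.toFinset, g j) =
          (a : ℤ) * b - 2 * ((∑ j ∈ μ.toFinset, (μ.count j : ℤ) * Qsum μ j) - b) := by
        have expand : ∀ j ∈ μ.toFinset, g j =
            ((a : ℤ) + 2) * ((μ.count j : ℤ) * j) - 2 * ((μ.count j : ℤ) * Qsum μ j) := by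
          intro j _; rw [hg]; ring
        rw [Finset.sum_congr rfl expand, Finset.sum_sub_distrib, ← Finset.mul_sum,
          ← Finset.mul_sum, hA]
        ring
      have hSle : (∑ j ∈ μ.toFinset, g j) ≤ (a : ℤ) * b := by rw [hSval]; linarith
      have hSdvd : 2 ∣ ((a : ℤ) * b - ∑ j ∈ μ.toFinset, g j) := by
        refine ⟨(∑ j ∈ μ.toFinset, (μ.count j : ℤ) * Qsum μ j) - b, ?_⟩
        rw [hSval]; ring
      -- per-child bounds from IH
      have hchle : ∀ i : Fin cs.length,
          ((cs[(i : ℕ)].leaves.sum : ℤ) ≤ (cs[(i : ℕ)].topA : ℤ) * cs[(i : ℕ)].topB) :=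
        fun i => (ih (i : ℕ) i.isLt).1
      have hchdvd : ∀ i : Fin cs.length,
          2 ∣ ((cs[(i : ℕ)].topA : ℤ) * cs[(i : ℕ)].topB - cs[(i : ℕ)].leaves.sum) :=
        fun i => (ih (i : ℕ) i.isLt).2
      have hsum_le : ((KOHTree.node μ a b cs).leaves.sum : ℤ) ≤
          ∑ i : Fin cs.length, ((cs[(i : ℕ)].topA : ℤ) * cs[(i : ℕ)].topB) := by
        rw [hleaves]
        exact Finset.sum_le_sum fun i _ => hchle i
      have hsum_dvd : 2 ∣ ((∑ i : Fin cs.length, ((cs[(i : ℕ)].topA : ℤ) * cs[(i : ℕ)].topB))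
          - ((KOHTree.node μ a b cs).leaves.sum : ℤ)) := by
        rw [hleaves, ← Finset.sum_sub_distrib]
        exact Finset.dvd_sum fun i _ => hchdvd i
      constructor
      · calc ((KOHTree.node μ a b cs).leaves.sum : ℤ)
            ≤ ∑ i : Fin cs.length, ((cs[(i : ℕ)].topA : ℤ) * cs[(i : ℕ)].topB) := hsum_le
          _ = ∑ j ∈ μ.toFinset, g j := hS
          _ ≤ (a : ℤ) * b := hSle
          _ = ((KOHTree.node μ a b cs).topA : ℤ) * (KOHTree.node μ a b cs).topB := by
              simp [KOHTree.topA, KOHTree.topB]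
      · have : ((KOHTree.node μ a b cs).topA : ℤ) * (KOHTree.node μ a b cs).topB
            - ((KOHTree.node μ a b cs).leaves.sum : ℤ)
            = ((a : ℤ) * b - ∑ j ∈ μ.toFinset, g j)
              + ((∑ i : Fin cs.length, ((cs[(i : ℕ)].topA : ℤ) * cs[(i : ℕ)].topB))
                - ((KOHTree.node μ a b cs).leaves.sum : ℤ)) := by
          rw [← hS]; simp [KOHTree.topA, KOHTree.topB]
        rw [this]
        exact dvd_add hSdvd hsum_dvd

theorem KOH_sigma_nonneg_even (n k : ℕ) (hn : 1 ≤ n) (hk : 1 ≤ k)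
    (T : KOHTree) (hT : KOHType T n k) :
    0 ≤ (n : ℤ) * k - (T.leaves.sum : ℤ) ∧ 2 ∣ ((n : ℤ) * k - (T.leaves.sum : ℤ)) := by
  obtain ⟨hK, hA, hB⟩ := hT
  have := koh_key T hK
  rw [hA, hB] at this
  exact ⟨by linarith [this.1], this.2⟩
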